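/- Under these hypotheses, the subspace Vₙ = span{ (Π_{i∈S} Bᵢ) ψ : S ⊆ {1,…,n} } has dimension exactly 2ⁿ, and there exists a linear isometric equivalence e : Vₙ ≃ (ℂ²)^{⊗n} such that for every v ∈ Vₙ and every i ∈ {1,…,n}, e(Aᵢ v) = Xᵢ e(v) and e(Bᵢ v) = Zᵢ e(v) (this is well defined since Aᵢ v, Bᵢ v ∈ Vₙ by invariance of Vₙ). -/

import Mathlib

/-!
Write `b S = (Π_{i ∈ S} Bᵢ) ψ`. Combining the relation for a triple `{i, j, k}` with the one for
`i` gives `Aⱼ Aₖ Bⱼ Bₖ ψ = -ψ`, hence `Aᵢ Bᵢ ψ = -Bᵢ Aᵢ ψ`; together with `Aᵢ ψ = b (univ \ {i})`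
this yields `Bᵢ (b S) = b (S ∆ {i})` and `Aᵢ (b S) = ± b (S ∆ (univ \ {i}))`, with sign `-1` iff
`i ∈ S`. Because the `Aᵢ`, `Bᵢ` are self-adjoint, these relations alone make the `2ⁿ` vectors `b S`
orthonormal: if `j ∈ S ∆ T`, then `Aⱼ` acts on `b S` and `b T` with opposite signs. In
`(ℂ²)^{⊗n}` the vectors `(Π_{i ∈ S} Zᵢ) φ`, for a suitable `φ`, satisfy the same relations with
`Xᵢ`, `Zᵢ` in place of `Aᵢ`, `Bᵢ`, so the isometry `b S ↦ (Π_{i ∈ S} Zᵢ) φ` intertwines the two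
actions.
-/

/-- The Pauli matrix `X = !![0, 1; 1, 0]`. -/
noncomputable def PauliX : Matrix (Fin 2) (Fin 2) ℂ := !![0, 1; 1, 0]

/-- The Pauli matrix `Z = !![1, 0; 0, -1]`. -/
noncomputable def PauliZ : Matrix (Fin 2) (Fin 2) ℂ := !![1, 0; 0, -1]

/-- The operator on `(ℂ²)^{⊗n}` (realised as `EuclideanSpace ℂ (Fin n → Fin 2)`)
acting as the one-qubit matrix `M` on the `i`-th tensor factor and as the identity
on all other factors. -/
noncomputable def tensorFactor (n : ℕ) (M : Matrix (Fin 2) (Fin 2) ℂ) (i : Fin n) :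
    Matrix (Fin n → Fin 2) (Fin n → Fin 2) ℂ :=
  Matrix.of fun f g =>
    M (f i) (g i) * ∏ j ∈ Finset.univ.erase i, (if f j = g j then (1 : ℂ) else 0)

/-- The product `Π_{i ∈ S} T i` of the operators `T i`, `i ∈ S`, multiplied in
increasing order of the index; all products used below are over pairwise commuting
operators, so the order of the factors is irrelevant. -/
noncomputable def prodOver {H : Type*} [NormedAddCommGroup H] [InnerProductSpace ℂ H]
    {n : ℕ} (T : Fin n → H →L[ℂ] H) (S : Finset (Fin n)) : H →L[ℂ] H :=
  ((S.sort (· ≤ ·)).map T).prod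

open scoped symmDiff
open Finset Function Module
open Submodule (span subset_span)

theorem Finset.insert_eq_symmDiff_singleton {α : Type*} [DecidableEq α] {a : α} {s : Finset α}
    (h : a ∉ s) : insert a s = s ∆ {a} := by
  ext x
  by_cases x = a <;> simp_all [mem_symmDiff]

theorem Finset.erase_eq_symmDiff_singleton {α : Type*} [DecidableEq α] {a : α} {s : Finset α}
    (h : a ∈ s) : s.erase a = s ∆ {a} := by
  ext x
  by_cases x = a <;> simp_all [mem_symmDiff]

theorem Finset.prod_symmDiff_of_mul_self {α β : Type*} [DecidableEq α] [CommMonoid β]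
    {f : α → β} (hf : ∀ a, f a * f a = 1) (s t : Finset α) :
    ∏ a ∈ s ∆ t, f a = (∏ a ∈ s, f a) * ∏ a ∈ t, f a := by
  have hsq : (∏ a ∈ s ∩ t, f a) * ∏ a ∈ s ∩ t, f a = 1 := by
    rw [← prod_mul_distrib, prod_eq_one fun a _ => hf a]
  have hunion : s ∪ t = s ∆ t ∪ s ∩ t := (symmDiff_sup_inf s t).symm
  have hd : Disjoint (s ∆ t) (s ∩ t) := disjoint_symmDiff_inf s t
  rw [← prod_union_inter, hunion, prod_union hd, mul_assoc, hsq, mul_one]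

section ProdOver

variable {H : Type*} [NormedAddCommGroup H] [InnerProductSpace ℂ H] {n : ℕ}
  {C : Fin n → H →L[ℂ] H}

theorem prodOver_eq_noncommProd (hc : ∀ i j, Commute (C i) (C j)) (S : Finset (Fin n)) :
    prodOver C S = S.noncommProd C fun i _ j _ _ => hc i j := by
  rw [prodOver, ← noncommProd_toFinset _ _ (fun i _ j _ _ => hc i j) (sort_nodup S _),
    sort_toFinset]

theorem prodOver_empty : prodOver C ∅ = 1 := by
  simp [prodOver]

theorem prodOver_singleton (i : Fin n) : prodOver C {i} = C i := by
  simp [prodOver]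

theorem prodOver_insert (hc : ∀ i j, Commute (C i) (C j)) {i : Fin n} {S : Finset (Fin n)}
    (hi : i ∉ S) : prodOver C (insert i S) = C i * prodOver C S := by
  rw [prodOver_eq_noncommProd hc, prodOver_eq_noncommProd hc]
  exact noncommProd_insert_of_notMem _ _ _ _ hi

theorem commute_prodOver (hc : ∀ i j, Commute (C i) (C j)) {T : H →L[ℂ] H}
    {S : Finset (Fin n)} (h : ∀ j ∈ S, Commute T (C j)) : Commute T (prodOver C S) := by
  rw [prodOver_eq_noncommProd hc]
  exact noncommProd_commute _ _ _ _ h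

theorem mul_prodOver (hc : ∀ i j, Commute (C i) (C j)) (h2 : ∀ i, C i * C i = 1)
    (i : Fin n) (S : Finset (Fin n)) : C i * prodOver C S = prodOver C (S ∆ {i}) := by
  by_cases hi : i ∈ S
  · rw [← insert_erase hi, prodOver_insert hc (notMem_erase i S), ← mul_assoc, h2, one_mul,
      insert_erase hi, erase_eq_symmDiff_singleton hi]
  · rw [← prodOver_insert hc hi, insert_eq_symmDiff_singleton hi]

theorem prodOver_mul (hc : ∀ i j, Commute (C i) (C j)) (h2 : ∀ i, C i * C i = 1)
    (S T : Finset (Fin n)) : prodOver C S * prodOver C T = prodOver C (S ∆ T) := by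
  induction S using Finset.induction_on with
  | empty => rw [prodOver_empty, one_mul, ← bot_eq_empty, bot_symmDiff]
  | insert i S hi ih =>
    rw [prodOver_insert hc hi, mul_assoc, ih, mul_prodOver hc h2,
      insert_eq_symmDiff_singleton hi, symmDiff_right_comm]

end ProdOver

section PauliRelations

variable {n : ℕ}

/-- How `Aᵢ` and `Bᵢ` act on the vectors `b S = (Π_{j ∈ S} Bⱼ) ψ` under maximal violation. -/
structure PauliRelations {R E : Type*} [Ring R] [AddCommGroup E] [Module R E]
    (A B : Fin n → E →ₗ[R] E) (b : Finset (Fin n) → E) : Prop where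
  B_apply : ∀ i S, B i (b S) = b (S ∆ {i})
  A_apply : ∀ i S, A i (b S) = (if i ∈ S then (-1 : R) else 1) • b (S ∆ univ.erase i)

theorem LinearEquiv.apply_mk_map_eq {R M W ι : Type*} [Semiring R] [AddCommMonoid M]
    [Module R M] [AddCommMonoid W] [Module R W] {s : ι → M} (e : span R (Set.range s) ≃ₗ[R] W)
    {T : M →ₗ[R] M} {T' : W →ₗ[R] W}
    (h : ∀ k, (e.symm (T' (e ⟨s k, subset_span (Set.mem_range_self k)⟩)) : M) = T (s k))
    {v : M} (hv : v ∈ span R (Set.range s)) (hTv : T v ∈ span R (Set.range s)) :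
    e ⟨T v, hTv⟩ = T' (e ⟨v, hv⟩) := by
  suffices hsymm : (e.symm (T' (e ⟨v, hv⟩)) : M) = T v by
    rw [← e.apply_symm_apply (T' _)]
    exact congrArg e (Subtype.ext hsymm.symm)
  clear hTv
  induction hv using Submodule.span_induction with
  | mem x hx =>
    obtain ⟨k, rfl⟩ := hx
    exact h k
  | zero =>
    change (e.symm (T' (e 0)) : M) = T 0
    simp only [map_zero, ZeroMemClass.coe_zero]
  | add x y hx hy ihx ihy =>
    change (e.symm (T' (e (⟨x, hx⟩ + ⟨y, hy⟩))) : M) = T (x + y)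
    simp only [map_add, Submodule.coe_add, ihx, ihy]
  | smul c x hx ih =>
    change (e.symm (T' (e (c • ⟨x, hx⟩))) : M) = T (c • x)
    rw [map_smul, LinearMap.map_smul, map_smul, Submodule.coe_smul, ih, LinearMap.map_smul]

theorem PauliRelations.intertwines {R M W : Type*} [Ring R] [AddCommGroup M] [Module R M]
    [AddCommGroup W] [Module R W] {A B : Fin n → M →ₗ[R] M} {A' B' : Fin n → W →ₗ[R] W}
    {b : Finset (Fin n) → M} {w : Finset (Fin n) → W} (hb : PauliRelations A B b)
    (hw : PauliRelations A' B' w) (e : span R (Set.range b) ≃ₗ[R] W)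
    (he : ∀ S, e ⟨b S, subset_span (Set.mem_range_self S)⟩ = w S) :
    ∀ (v : M) (hv : v ∈ span R (Set.range b)) (i : Fin n) (hAv : A i v ∈ span R (Set.range b))
      (hBv : B i v ∈ span R (Set.range b)),
      e ⟨A i v, hAv⟩ = A' i (e ⟨v, hv⟩) ∧ e ⟨B i v, hBv⟩ = B' i (e ⟨v, hv⟩) := by
  have he_symm : ∀ S, e.symm (w S) = ⟨b S, subset_span (Set.mem_range_self S)⟩ := fun S =>
    e.symm_apply_eq.2 (he S).symm
  intro v hv i hAv hBv
  constructor <;> apply e.apply_mk_map_eq <;> intro S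
  · rw [he, hw.A_apply, map_smul, he_symm, Submodule.coe_smul, hb.A_apply]
  · rw [he, hw.B_apply, he_symm, hb.B_apply]

variable {𝕜 E : Type*} [RCLike 𝕜] [NormedAddCommGroup E] [InnerProductSpace 𝕜 E]
  {A B : Fin n → E →ₗ[𝕜] E} {b : Finset (Fin n) → E}

theorem PauliRelations.inner_symmDiff (h : PauliRelations A B b) (hB : ∀ i, (B i).IsSymmetric)
    (S T U : Finset (Fin n)) : inner 𝕜 (b (S ∆ U)) (b (T ∆ U)) = inner 𝕜 (b S) (b T) := by
  induction U using Finset.induction_on with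
  | empty => simp only [← bot_eq_empty, symmDiff_bot]
  | insert i U hi ih =>
    rw [insert_eq_symmDiff_singleton hi, ← symmDiff_assoc, ← symmDiff_assoc, ← h.B_apply,
      ← h.B_apply, hB, h.B_apply, h.B_apply, symmDiff_symmDiff_cancel_right, ih]

theorem PauliRelations.orthonormal (h : PauliRelations A B b) (hA : ∀ i, (A i).IsSymmetric)
    (hB : ∀ i, (B i).IsSymmetric) (hb : ‖b ∅‖ = 1) : Orthonormal 𝕜 b := by
  refine ⟨fun S => ?_, fun S T hST => ?_⟩
  · have hS := h.inner_symmDiff hB ∅ ∅ S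
    rw [← bot_eq_empty, bot_symmDiff, bot_eq_empty, inner_self_eq_norm_sq_to_K,
      inner_self_eq_norm_sq_to_K, hb, RCLike.ofReal_one, one_pow] at hS
    exact (pow_eq_one_iff_of_nonneg (norm_nonneg _) two_ne_zero).1 (mod_cast hS)
  · obtain ⟨j, hj⟩ := symmDiff_nonempty.2 hST
    have key := hA j (b (S ∆ univ.erase j)) (b T)
    rw [h.A_apply, h.A_apply, symmDiff_symmDiff_cancel_right] at key
    simp only [inner_smul_left, inner_smul_right, h.inner_symmDiff hB] at key
    simp only [mem_symmDiff, mem_erase] at hj key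
    rcases hj with ⟨hjS, hjT⟩ | ⟨hjT, hjS⟩ <;>
      simpa [hjS, hjT, neg_eq_self, self_eq_neg] using key

end PauliRelations

section MaxViolation

variable {H : Type*} [NormedAddCommGroup H] [InnerProductSpace ℂ H] {n : ℕ}

structure IsMaxViolation (A B : Fin n → H →L[ℂ] H) (ψ : H) : Prop where
  A_comm : ∀ i j, i ≠ j → ∀ x, A i (A j x) = A j (A i x)
  A_B_comm : ∀ i j, i ≠ j → ∀ x, A i (B j x) = B j (A i x)
  B_comm : ∀ i j, i ≠ j → ∀ x, B i (B j x) = B j (B i x)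
  A_A : ∀ i x, A i (A i x) = x
  B_B : ∀ i x, B i (B i x) = x
  plus : ∀ i, A i (prodOver B (univ.erase i) ψ) = ψ
  minus : ∀ S : Finset (Fin n), #S = 3 → prodOver A S (prodOver B Sᶜ ψ) = -ψ

namespace IsMaxViolation

variable {A B : Fin n → H →L[ℂ] H} {ψ : H}

theorem commute_A (h : IsMaxViolation A B ψ) (i j : Fin n) : Commute (A i) (A j) := by
  rcases eq_or_ne i j with rfl | hij
  · exact .refl _
  · exact ContinuousLinearMap.ext (h.A_comm i j hij)

theorem commute_B (h : IsMaxViolation A B ψ) (i j : Fin n) : Commute (B i) (B j) := by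
  rcases eq_or_ne i j with rfl | hij
  · exact .refl _
  · exact ContinuousLinearMap.ext (h.B_comm i j hij)

theorem B_mul_self (h : IsMaxViolation A B ψ) (i : Fin n) : B i * B i = 1 :=
  ContinuousLinearMap.ext (h.B_B i)

theorem B_apply_prodOver (h : IsMaxViolation A B ψ) (i : Fin n) (S : Finset (Fin n)) (x : H) :
    B i (prodOver B S x) = prodOver B (S ∆ {i}) x := by
  rw [← mul_prodOver h.commute_B h.B_mul_self]
  rfl

theorem prodOver_apply_prodOver (h : IsMaxViolation A B ψ) (S T : Finset (Fin n)) (x : H) :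
    prodOver B S (prodOver B T x) = prodOver B (S ∆ T) x := by
  rw [← prodOver_mul h.commute_B h.B_mul_self]
  rfl

theorem A_apply_prodOver_of_notMem (h : IsMaxViolation A B ψ) {i : Fin n}
    {S : Finset (Fin n)} (hi : i ∉ S) (x : H) :
    A i (prodOver B S x) = prodOver B S (A i x) :=
  DFunLike.congr_fun (commute_prodOver h.commute_B fun j hj =>
    ContinuousLinearMap.ext (h.A_B_comm i j fun hij => hi (hij ▸ hj))).eq x

theorem A_apply_self (h : IsMaxViolation A B ψ) (i : Fin n) :
    A i ψ = prodOver B (univ.erase i) ψ := by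
  conv_lhs => rw [← h.plus i]
  exact h.A_A i _

theorem A_A_B_B_apply (h : IsMaxViolation A B ψ) (hn : 3 ≤ n) {j k : Fin n} (hjk : j ≠ k) :
    A j (A k (B j (B k ψ))) = -ψ := by
  obtain ⟨i, -, hi⟩ := exists_mem_notMem_of_card_lt_card (s := {j, k}) (t := univ)
    (by rw [card_univ, Fintype.card_fin]; exact card_le_two.trans_lt (by omega))
  simp only [mem_insert, mem_singleton, not_or] at hi
  obtain ⟨hij, hik⟩ := hi
  have hB : ∀ x, prodOver B (univ.erase i) x = B j (B k (prodOver B {i, j, k}ᶜ x)) := by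
    have hset : univ.erase i = insert j (insert k ({i, j, k}ᶜ : Finset (Fin n))) := by
      ext m
      by_cases m = i <;> by_cases m = j <;> by_cases m = k <;> simp_all
    intro x
    rw [hset, prodOver_insert h.commute_B (by simp [hjk]), prodOver_insert h.commute_B (by simp)]
    rfl
  have hA : ∀ x, prodOver A {i, j, k} x = A i (A j (A k x)) := by
    intro x
    rw [prodOver_insert h.commute_A (by simp [hij, hik]),
      prodOver_insert h.commute_A (by simp [hjk]), prodOver_singleton]
    rfl
  calc A j (A k (B j (B k ψ)))
      = A j (A k (B j (B k (A i (B j (B k (prodOver B {i, j, k}ᶜ ψ))))))) := by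
        rw [← hB, h.plus]
    _ = A i (A j (A k (prodOver B {i, j, k}ᶜ ψ))) := by
        simp only [← h.A_B_comm i j hij, ← h.A_B_comm i k hik, h.A_comm j i (Ne.symm hij),
          h.A_comm k i (Ne.symm hik), h.B_comm k j hjk.symm, h.B_B]
    _ = -ψ := by
        rw [← hA]
        exact h.minus _ (card_eq_three.2 ⟨i, j, k, hij, hik, hjk, rfl⟩)

theorem A_B_apply (h : IsMaxViolation A B ψ) (hn : 3 ≤ n) (p : Fin n) :
    A p (B p ψ) = -prodOver B univ ψ := by
  obtain ⟨q, hqp⟩ := Fintype.exists_ne_of_one_lt_card (by rw [Fintype.card_fin]; omega) p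
  have key := congrArg (fun z => B q (A q z)) (h.A_A_B_B_apply hn (Ne.symm hqp))
  simp only [map_neg, h.A_comm q p hqp, h.A_A, ← h.A_B_comm p q (Ne.symm hqp), h.B_comm q p hqp,
    h.B_B, h.A_apply_self, h.B_apply_prodOver] at key
  rwa [erase_eq_symmDiff_singleton (mem_univ q), symmDiff_symmDiff_cancel_right] at key

theorem prodOver_apply_of_mem (h : IsMaxViolation A B ψ) {i : Fin n} {S : Finset (Fin n)}
    (hi : i ∈ S) (x : H) : prodOver B S x = prodOver B (S.erase i) (B i x) := by
  conv_lhs => rw [← insert_erase hi, prodOver_insert h.commute_B (notMem_erase i S)]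
  exact DFunLike.congr_fun (commute_prodOver h.commute_B fun j _ => h.commute_B i j).eq x

theorem A_apply_prodOver (h : IsMaxViolation A B ψ) (hn : 3 ≤ n) (i : Fin n)
    (S : Finset (Fin n)) :
    A i (prodOver B S ψ) =
      (if i ∈ S then (-1 : ℂ) else 1) • prodOver B (S ∆ univ.erase i) ψ := by
  by_cases hi : i ∈ S
  · rw [if_pos hi, neg_one_smul, h.prodOver_apply_of_mem hi,
      h.A_apply_prodOver_of_notMem (notMem_erase i S), h.A_B_apply hn, map_neg,
      h.prodOver_apply_prodOver, erase_eq_symmDiff_singleton hi,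
      erase_eq_symmDiff_singleton (mem_univ i), symmDiff_right_comm, symmDiff_assoc]
  · rw [if_neg hi, one_smul, h.A_apply_prodOver_of_notMem hi, h.A_apply_self,
      h.prodOver_apply_prodOver]

theorem pauliRelations (h : IsMaxViolation A B ψ) (hn : 3 ≤ n) :
    PauliRelations (fun i => (A i : H →ₗ[ℂ] H)) (fun i => (B i : H →ₗ[ℂ] H))
      fun S => prodOver B S ψ :=
  ⟨fun i S => h.B_apply_prodOver i S ψ, fun i S => h.A_apply_prodOver hn i S⟩

end IsMaxViolation

end MaxViolation

theorem Orthonormal.exists_linearIsometryEquiv_span {𝕜 H W ι : Type*} [RCLike 𝕜]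
    [NormedAddCommGroup H] [InnerProductSpace 𝕜 H] [NormedAddCommGroup W]
    [InnerProductSpace 𝕜 W] [FiniteDimensional 𝕜 W] [Fintype ι] {b : ι → H} {w : ι → W}
    (hb : Orthonormal 𝕜 b) (hw : Orthonormal 𝕜 w) (hcard : Fintype.card ι = finrank 𝕜 W) :
    ∃ e : span 𝕜 (Set.range b) ≃ₗᵢ[𝕜] W,
      ∀ k, e ⟨b k, subset_span (Set.mem_range_self k)⟩ = w k := by
  have hbV : Orthonormal 𝕜 (Basis.span hb.linearIndependent) := by
    convert orthonormal_span hb with k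
    simp
  let obV := (Basis.span hb.linearIndependent).toOrthonormalBasis hbV
  let obW := OrthonormalBasis.mk hw (hw.linearIndependent.span_eq_top_of_card_eq_finrank' hcard).ge
  refine ⟨obV.equiv obW (Equiv.refl ι), fun k => ?_⟩
  simpa [obV, obW] using obV.equiv_apply_basis obW (Equiv.refl ι) k

section Model

variable {n : ℕ}

theorem toEuclideanLin_tensorFactor_apply (M : Matrix (Fin 2) (Fin 2) ℂ) (i : Fin n)
    (x : EuclideanSpace ℂ (Fin n → Fin 2)) (f : Fin n → Fin 2) :
    Matrix.toEuclideanLin (tensorFactor n M i) x f = ∑ a, M (f i) a * x (update f i a) := by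
  have hfactor : ∀ g, tensorFactor n M i f g =
      if g ∈ Finset.univ.image (update f i) then M (f i) (g i) else 0 := by
    intro g
    simp [tensorFactor, prod_boole, update_eq_iff]
  rw [Matrix.toLpLin_apply, PiLp.toLp_apply, Matrix.mulVec, dotProduct]
  simp only [hfactor, ite_mul, zero_mul, sum_ite_mem, Finset.univ_inter]
  rw [sum_image fun a _ b _ h => update_injective f i h]
  simp only [update_self]

theorem toEuclideanLin_tensorFactor_pauliZ_apply (i : Fin n)
    (x : EuclideanSpace ℂ (Fin n → Fin 2)) (f : Fin n → Fin 2) :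
    Matrix.toEuclideanLin (tensorFactor n PauliZ i) x f = (-1) ^ (f i : ℕ) * x f := by
  rw [toEuclideanLin_tensorFactor_apply, Fin.sum_univ_two]
  rcases Fin.exists_fin_two.1 ⟨f i, rfl⟩ with h | h <;>
    simp [PauliZ, h] <;> rw [← h, update_eq_self]

theorem toEuclideanLin_tensorFactor_pauliX_apply (i : Fin n)
    (x : EuclideanSpace ℂ (Fin n → Fin 2)) (f : Fin n → Fin 2) :
    Matrix.toEuclideanLin (tensorFactor n PauliX i) x f = x (update f i (f i + 1)) := by
  rw [toEuclideanLin_tensorFactor_apply, Fin.sum_univ_two]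
  rcases Fin.exists_fin_two.1 ⟨f i, rfl⟩ with h | h <;> simp [PauliX, h]

theorem Matrix.IsHermitian.tensorFactor {M : Matrix (Fin 2) (Fin 2) ℂ} (hM : M.IsHermitian)
    (i : Fin n) : (tensorFactor n M i).IsHermitian := by
  ext f g
  simp [_root_.tensorFactor, ← hM.apply (f i) (g i), eq_comm]

theorem isHermitian_pauliX : PauliX.IsHermitian := by
  ext a b
  fin_cases a <;> fin_cases b <;> simp [PauliX]

theorem isHermitian_pauliZ : PauliZ.IsHermitian := by
  ext a b
  fin_cases a <;> fin_cases b <;> simp [PauliZ]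

theorem neg_one_pow_val_add_one (a : Fin 2) :
    (-1 : ℂ) ^ ((a + 1 : Fin 2) : ℕ) = -(-1) ^ (a : ℕ) := by
  fin_cases a <;> simp

theorem neg_one_pow_choose_two_succ (t : ℕ) :
    (-1 : ℂ) ^ (t + 1).choose 2 = (-1) ^ t * (-1) ^ t.choose 2 := by
  rw [Nat.choose_succ_succ', Nat.choose_one_right, pow_add]

namespace PauliModel

def weight (f : Fin n → Fin 2) : ℕ := ∑ i, (f i : ℕ)

def walsh (S : Finset (Fin n)) (f : Fin n → Fin 2) : ℂ := ∏ i ∈ S, (-1) ^ (f i : ℕ)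

def phase (f : Fin n → Fin 2) : ℂ := (-1) ^ (weight f).choose 2

/-- `state ∅`, with amplitudes `2^{-n/2} (-1)^⌊|f|/2⌋`, realises the maximal violation with
`Aᵢ = Xᵢ`, `Bᵢ = Zᵢ`, and `state S = (Π_{i ∈ S} Zᵢ) (state ∅)`. -/
noncomputable def state (S : Finset (Fin n)) : EuclideanSpace ℂ (Fin n → Fin 2) :=
  WithLp.toLp 2 fun f => ((√(2 ^ n))⁻¹ : ℝ) * walsh S f * phase f

theorem walsh_symmDiff (S T : Finset (Fin n)) (f : Fin n → Fin 2) :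
    walsh (S ∆ T) f = walsh S f * walsh T f :=
  prod_symmDiff_of_mul_self
    (fun i => by rw [← pow_add, ← two_mul, pow_mul, neg_one_sq, one_pow]) S T

theorem walsh_update (S : Finset (Fin n)) (i : Fin n) (f : Fin n → Fin 2) :
    walsh S (update f i (f i + 1)) = (if i ∈ S then -1 else 1) * walsh S f := by
  by_cases hi : i ∈ S
  · rw [walsh, walsh, ← mul_prod_erase _ _ hi, ← mul_prod_erase S _ hi, update_self,
      neg_one_pow_val_add_one, if_pos hi,
      prod_congr rfl fun j hj => by rw [update_of_ne (ne_of_mem_erase hj)]]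
    ring
  · rw [if_neg hi, one_mul]
    exact prod_congr rfl fun j hj => by rw [update_of_ne (ne_of_mem_of_not_mem hj hi)]

theorem walsh_univ_erase (i : Fin n) (f : Fin n → Fin 2) :
    walsh (univ.erase i) f = (-1) ^ weight f * (-1) ^ (f i : ℕ) := by
  rw [erase_eq_symmDiff_singleton (mem_univ i), walsh_symmDiff, walsh, walsh,
    Finset.prod_singleton, prod_pow_eq_pow_sum, weight]

theorem phase_update (f : Fin n → Fin 2) (i : Fin n) :
    phase (update f i (f i + 1)) = (-1) ^ weight f * (-1) ^ (f i : ℕ) * phase f := by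
  obtain ⟨t, ht⟩ : ∃ t, ∀ a, weight (update f i a) = a + t := by
    refine ⟨∑ j ∈ univ.erase i, (f j : ℕ), fun a => ?_⟩
    rw [weight, ← add_sum_erase _ _ (mem_univ i), update_self]
    exact congrArg _ (sum_congr rfl fun j hj => by rw [update_of_ne (ne_of_mem_erase hj)])
  have hf : weight f = f i + t := by simpa using ht (f i)
  rw [phase, phase, ht, hf]
  rcases Fin.exists_fin_two.1 ⟨f i, rfl⟩ with h | h <;> rw [h]
  · simp [neg_one_pow_choose_two_succ, add_comm 1 t]
  · have hsq : ((-1 : ℂ) ^ t) ^ 2 = 1 := by rw [← pow_mul, mul_comm, pow_mul, neg_one_sq, one_pow]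
    rw [show ((1 + 1 : Fin 2) : ℕ) = 0 from rfl, Fin.val_one, zero_add, add_comm 1 t,
      neg_one_pow_choose_two_succ, pow_one, pow_succ]
    linear_combination (-(-1 : ℂ) ^ t.choose 2) * hsq

theorem pauliRelations :
    PauliRelations (fun i => Matrix.toEuclideanLin (tensorFactor n PauliX i))
      (fun i => Matrix.toEuclideanLin (tensorFactor n PauliZ i)) state := by
  constructor <;> intro i S <;> ext f
  · rw [toEuclideanLin_tensorFactor_pauliZ_apply]
    simp only [state, PiLp.toLp_apply]
    rw [walsh_symmDiff, walsh, walsh, Finset.prod_singleton]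
    ring
  · rw [toEuclideanLin_tensorFactor_pauliX_apply]
    simp only [state, PiLp.toLp_apply, PiLp.smul_apply, smul_eq_mul]
    rw [walsh_update, phase_update, walsh_symmDiff, walsh_univ_erase]
    ring

theorem norm_state_empty : ‖state (∅ : Finset (Fin n))‖ = 1 := by
  rw [EuclideanSpace.norm_eq, Real.sqrt_eq_one]
  simp [state, walsh, phase]

theorem orthonormal_state : Orthonormal ℂ (state (n := n)) :=
  pauliRelations.orthonormal
    (fun i => Matrix.isSymmetric_toEuclideanLin_iff.2 (isHermitian_pauliX.tensorFactor i))
    (fun i => Matrix.isSymmetric_toEuclideanLin_iff.2 (isHermitian_pauliZ.tensorFactor i))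
    norm_state_empty

end PauliModel

end Model

/-- under the maximal-violation hypotheses for `Iₙ` (setup as in
Statement 9), the subspace `Vₙ = span{(Π_{i∈S} Bᵢ)ψ : S ⊆ {1,…,n}}` has dimension
exactly `2ⁿ`, and there is a linear isometric equivalence `e : Vₙ ≃ (ℂ²)^{⊗n}`
(the right-hand side realised as `EuclideanSpace ℂ (Fin n → Fin 2)`) with
`e(Aᵢ v) = Xᵢ e(v)` and `e(Bᵢ v) = Zᵢ e(v)` for every `v ∈ Vₙ` and every `i`
(well defined since `Aᵢ v, Bᵢ v ∈ Vₙ` by invariance, expressed here by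
quantifying over the membership proofs). -/
theorem stmt12 {H : Type*} [NormedAddCommGroup H] [InnerProductSpace ℂ H]
    (n : ℕ) (hn : 3 ≤ n)
    (A B : Fin n → H →L[ℂ] H)
    (hAsa : ∀ i (x y : H), (inner ℂ (A i x) y : ℂ) = inner ℂ x (A i y))
    (hBsa : ∀ i (x y : H), (inner ℂ (B i x) y : ℂ) = inner ℂ x (B i y))
    (hAinv : ∀ i (x : H), A i (A i x) = x)
    (hBinv : ∀ i (x : H), B i (B i x) = x)
    (hAA : ∀ i j, i ≠ j → ∀ x : H, A i (A j x) = A j (A i x))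
    (hAB : ∀ i j, i ≠ j → ∀ x : H, A i (B j x) = B j (A i x))
    (hBB : ∀ i j, i ≠ j → ∀ x : H, B i (B j x) = B j (B i x))
    (ψ : H) (hψ : ‖ψ‖ = 1)
    (hplus : ∀ i, A i (prodOver B (Finset.univ.erase i) ψ) = ψ)
    (hminus : ∀ S : Finset (Fin n), S.card = 3 →
      prodOver A S (prodOver B Sᶜ ψ) = -ψ)
    (V : Submodule ℂ H)
    (hV : V = Submodule.span ℂ {v : H | ∃ S : Finset (Fin n), v = prodOver B S ψ}) :
    Module.finrank ℂ V = 2 ^ n ∧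
    ∃ e : V ≃ₗᵢ[ℂ] EuclideanSpace ℂ (Fin n → Fin 2),
      ∀ (v : H) (hv : v ∈ V) (i : Fin n) (hAv : A i v ∈ V) (hBv : B i v ∈ V),
        e ⟨A i v, hAv⟩ = Matrix.toEuclideanLin (tensorFactor n PauliX i) (e ⟨v, hv⟩) ∧
        e ⟨B i v, hBv⟩ = Matrix.toEuclideanLin (tensorFactor n PauliZ i) (e ⟨v, hv⟩) := by
  have h : IsMaxViolation A B ψ := ⟨hAA, hAB, hBB, hAinv, hBinv, hplus, hminus⟩
  have hrel := h.pauliRelations hn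
  have hb : Orthonormal ℂ fun S => prodOver B S ψ :=
    hrel.orthonormal hAsa hBsa (by rwa [prodOver_empty])
  have hV' : V = span ℂ (Set.range fun S => prodOver B S ψ) :=
    hV.trans (congrArg _ (Set.ext fun _ => exists_congr fun _ => eq_comm))
  subst hV'
  have hcard : Fintype.card (Finset (Fin n)) = 2 ^ n := by simp
  obtain ⟨e, he⟩ := hb.exists_linearIsometryEquiv_span PauliModel.orthonormal_state
    (by simp [hcard, finrank_euclideanSpace])
  exact ⟨(finrank_span_eq_card hb.linearIndependent).trans hcard, e,
    hrel.intertwines PauliModel.pauliRelations e.toLinearEquiv he⟩
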